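/- arXiv:math/0406236 — 7 statements merged into one kernel-verified Lean document; each statement's English description precedes it below -/
import Mathlib

section
/- For every natural number n ≥ 0 and real ε → 0, the limit of (Γ(−n−ε) + Γ(−n+ε))/2 as ε → 0 exists and equals (−1)^n · Γ'(n+1)/Γ(n+1)². -/
/-!
By the reflection formula, `Γ(-n + ε) Γ(n + 1 - ε) = (-1)ⁿ π / sin (π ε)`, so
`(Γ(-n - ε) + Γ(-n + ε)) / 2` equals `-(-1)ⁿ (π ε / sin (π ε))` times the symmetric difference
quotient `((1/Γ)(n + 1 + ε) - (1/Γ)(n + 1 - ε)) / (2 ε)`. As `ε → 0` the first factor tends to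
`-(-1)ⁿ` and the second to `(1/Γ)'(n + 1) = -Γ'(n + 1) / Γ(n + 1)²`.
-/

open Filter Topology

theorem HasDerivAt.tendsto_symmetric_slope_zero {𝕜 F : Type*} [NontriviallyNormedField 𝕜]
    [NormedAddCommGroup F] [NormedSpace 𝕜 F] {f : 𝕜 → F} {f' : F} {x : 𝕜}
    (hf : HasDerivAt f f' x) :
    Tendsto (fun t ↦ t⁻¹ • (f (x + t) - f (x - t))) (𝓝[≠] 0) (𝓝 (2 • f')) := by
  have hplus : HasDerivAt (fun t ↦ f (x + t)) f' 0 := .comp_const_add x 0 (by rwa [add_zero])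
  have hminus : HasDerivAt (fun t ↦ f (x - t)) (-f') 0 := .comp_const_sub x 0 (by rwa [sub_zero])
  simpa [two_nsmul] using (hplus.sub hminus).tendsto_slope_zero

namespace Real

theorem Gamma_neg_nat_add_mul_Gamma_nat_add_one_sub (n : ℕ) (ε : ℝ) :
    Gamma (-n + ε) * Gamma (n + 1 - ε) = (-1) ^ n * π / sin (π * ε) := by
  rw [show (n : ℝ) + 1 - ε = 1 - (-n + ε) by ring, Gamma_mul_Gamma_one_sub,
    show π * (-n + ε) = π * ε - n * π by ring, sin_sub_nat_mul_pi, div_mul_eq_div_div_swap,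
    div_eq_mul_inv _ ((-1 : ℝ) ^ n), ← inv_pow, inv_neg_one]
  ring

theorem Gamma_neg_nat_add {n : ℕ} {ε : ℝ} (hε : ε ≠ 0) (hΓ : Gamma (n + 1 - ε) ≠ 0) :
    Gamma (-n + ε) = (-1) ^ n * (ε * sinc (π * ε))⁻¹ * (Gamma (n + 1 - ε))⁻¹ := by
  rw [eq_mul_inv_iff_mul_eq₀ hΓ, Gamma_neg_nat_add_mul_Gamma_nat_add_one_sub,
    sinc_of_ne_zero (mul_ne_zero pi_ne_zero hε)]
  field_simp

theorem Gamma_neg_nat_sub_add_Gamma_neg_nat_add {n : ℕ} {ε : ℝ} (hε : ε ≠ 0)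
    (hΓsub : Gamma (n + 1 - ε) ≠ 0) (hΓadd : Gamma (n + 1 + ε) ≠ 0) :
    Gamma (-n - ε) + Gamma (-n + ε) =
      -(-1) ^ n * (sinc (π * ε))⁻¹ * (ε⁻¹ * ((Gamma (n + 1 + ε))⁻¹ - (Gamma (n + 1 - ε))⁻¹)) := by
  have hneg := Gamma_neg_nat_add (n := n) (neg_ne_zero.mpr hε) (by rwa [sub_neg_eq_add])
  rw [← sub_eq_add_neg, sub_neg_eq_add, mul_neg, sinc_neg] at hneg
  rw [hneg, Gamma_neg_nat_add hε hΓsub]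
  ring

theorem tendsto_inv_sinc_pi_mul_nhdsNE_zero :
    Tendsto (fun ε ↦ (sinc (π * ε))⁻¹) (𝓝[≠] 0) (𝓝 1) := by
  have hsinc : Tendsto (fun ε ↦ sinc (π * ε)) (𝓝 0) (𝓝 1) := by
    simpa using (show Continuous fun ε ↦ sinc (π * ε) by fun_prop).tendsto 0
  simpa using (hsinc.inv₀ one_ne_zero).mono_left nhdsWithin_le_nhds

end Real

open Real in
theorem pv_Gamma_at_neg_nat (n : ℕ) :
    Tendsto (fun ε : ℝ => (Real.Gamma (-(n : ℝ) - ε) + Real.Gamma (-(n : ℝ) + ε)) / 2)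
      (𝓝[≠] (0 : ℝ))
      (𝓝 ((-1) ^ n * (deriv Real.Gamma (n + 1) / (Real.Gamma (n + 1)) ^ 2))) := by
  have hΓ : HasDerivAt Gamma (deriv Gamma (n + 1)) (n + 1) :=
    (differentiableOn_Gamma_Ioi.differentiableAt (Ioi_mem_nhds (by positivity))).hasDerivAt
  have hslope := (hΓ.inv (Gamma_pos_of_pos (by positivity)).ne').tendsto_symmetric_slope_zero
  have hlim := (tendsto_inv_sinc_pi_mul_nhdsNE_zero.const_mul (-(-1) ^ n / 2)).mul hslope
  have hval : (-1) ^ n * (deriv Gamma (n + 1) / Gamma (n + 1) ^ 2) =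
      -(-1) ^ n / 2 * 1 * 2 • (-deriv Gamma (n + 1) / Gamma (n + 1) ^ 2) := by
    rw [two_nsmul]
    ring
  have hΓ_pos : ∀ ε ∈ Set.Ioo (-1 : ℝ) 1, 0 < Gamma (n + 1 - ε) ∧ 0 < Gamma (n + 1 + ε) :=
    fun ε hε ↦ ⟨Gamma_pos_of_pos (by linarith [hε.2, n.cast_nonneg (α := ℝ)]),
      Gamma_pos_of_pos (by linarith [hε.1, n.cast_nonneg (α := ℝ)])⟩
  rw [hval]
  refine hlim.congr' ?_
  filter_upwards [self_mem_nhdsWithin,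
    nhdsWithin_le_nhds (Ioo_mem_nhds (neg_lt_zero.mpr one_pos) one_pos)] with ε hε hsmall
  rw [Gamma_neg_nat_sub_add_Gamma_neg_nat_add hε (hΓ_pos ε hsmall).1.ne' (hΓ_pos ε hsmall).2.ne']
  simp only [smul_eq_mul, Pi.inv_apply]
  ring
end

section
/- If f₁ is holomorphic at a and f₂ is meromorphic with a simple pole at a, then p.v._{z=a}(f₁(z)·f₂(z)) = f₁(a) · p.v._{z=a} f₂(z) + f₁'(a) · res_{z=a} f₂(z). -/
open Filter Topology Complex

/-- The principal value of `f` at `a`: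
`p.v._{z=a} f = lim_{ρ→0⁺} (2πi)⁻¹ ∮_{|z-a|=ρ} f z/(z-a) dz`, i.e. the constant
term of the Laurent expansion of `f` at `a` (equivalently `res_{z=a} (f z/(z-a))`). -/
noncomputable def pv (f : ℂ → ℂ) (a : ℂ) : ℂ :=
  limUnder (𝓝[>] (0 : ℝ))
    (fun ρ : ℝ => (2 * Real.pi * I)⁻¹ * ∮ z in C(a, ρ), f z / (z - a))

/-- The residue of `f` at `a` via the circle integral. -/
noncomputable def res (f : ℂ → ℂ) (a : ℂ) : ℂ :=
  limUnder (𝓝[>] (0 : ℝ)) (fun ρ : ℝ => (2 * Real.pi * I)⁻¹ * ∮ z in C(a, ρ), f z)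

/-!
On every small circle around `a`, `h z * f₂ z / (z - a) = c * h z / (z - a) ^ 2 + h z * g z / (z - a)`,
so Cauchy's formulas for `h'` and for `h * g` make the normalised circle integral equal to
`h a * g a + c * deriv h a` exactly, not only in the limit. The three quantities in the theorem
are the cases `h = f₁`, `h = 1` and `h = (· - a)`.
-/

open Metric Set Real

lemma limUnder_circleIntegral_eq_of_forall_Ioo {F : ℂ → ℂ} {a v : ℂ} {r : ℝ} (hr : 0 < r)
    (hF : ∀ ρ ∈ Ioo 0 r, (∮ z in C(a, ρ), F z) = 2 * π * I * v) :
    limUnder (𝓝[>] 0) (fun ρ : ℝ => (2 * π * I)⁻¹ * ∮ z in C(a, ρ), F z) = v := by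
  refine (tendsto_const_nhds.congr' ?_).limUnder_eq
  filter_upwards [Ioo_mem_nhdsGT hr] with ρ hρ
  rw [hF ρ hρ, inv_mul_cancel_left₀ two_pi_I_ne_zero]

theorem circleIntegral_mul_div_sub_of_simplePole {U : Set ℂ} {f g h : ℂ → ℂ} {a c : ℂ} {ρ : ℝ}
    (hU : IsOpen U) (hρ : 0 < ρ) (hρU : closedBall a ρ ⊆ U) (hh : DifferentiableOn ℂ h U)
    (hg : DifferentiableOn ℂ g U) (hf : ∀ z ≠ a, f z = c / (z - a) + g z) :
    (∮ z in C(a, ρ), h z * f z / (z - a)) = 2 * π * I * (h a * g a + c * deriv h a) := by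
  have ha : a ∈ ball a ρ := mem_ball_self hρ
  have hsphere : ∀ z ∈ sphere a ρ, z - a ≠ 0 := fun z hz =>
    sub_ne_zero.2 (ne_of_mem_sphere hz hρ.ne')
  have hsplit : EqOn (fun z => h z * f z / (z - a))
      (fun z => c * (((z - a) ^ 2)⁻¹ * h z) + (z - a)⁻¹ * (h z * g z)) (sphere a ρ) := by
    intro z hz
    have hza := hsphere z hz
    simp only [hf z (sub_ne_zero.1 hza)]
    field_simp
  have hhS : ContinuousOn h (sphere a ρ) := hh.continuousOn.mono (sphere_subset_closedBall.trans hρU)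
  have hgS : ContinuousOn g (sphere a ρ) := hg.continuousOn.mono (sphere_subset_closedBall.trans hρU)
  have hpole : CircleIntegrable (fun z => c * (((z - a) ^ 2)⁻¹ * h z)) a ρ := by
    refine ContinuousOn.circleIntegrable hρ.le (continuousOn_const.mul (ContinuousOn.mul ?_ hhS))
    exact ((continuousOn_id.sub continuousOn_const).pow 2).inv₀ fun z hz =>
      pow_ne_zero 2 (hsphere z hz)
  have hreg : CircleIntegrable (fun z => (z - a)⁻¹ * (h z * g z)) a ρ := by
    refine ContinuousOn.circleIntegrable hρ.le (ContinuousOn.mul ?_ (hhS.mul hgS))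
    exact (continuousOn_id.sub continuousOn_const).inv₀ hsphere
  have hderiv : (∮ z in C(a, ρ), ((z - a) ^ 2)⁻¹ * h z) = 2 * π * I * deriv h a := by
    rw [← two_pi_I_inv_smul_circleIntegral_sub_sq_inv_smul_of_differentiable hU hρU hh ha,
      smul_eq_mul, mul_inv_cancel_left₀ two_pi_I_ne_zero]
    rfl
  have hcauchy : (∮ z in C(a, ρ), (z - a)⁻¹ * (h z * g z)) = 2 * π * I * (h a * g a) :=
    ((hh.mul hg).mono hρU).circleIntegral_sub_inv_smul ha
  rw [circleIntegral.integral_congr hρ.le hsplit, circleIntegral.integral_add hpole hreg,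
    circleIntegral.integral_const_mul, hderiv, hcauchy]
  ring

theorem pv_mul_simple_pole (f₁ f₂ g : ℂ → ℂ) (a c : ℂ)
    (hf₁ : AnalyticAt ℂ f₁ a) (hg : AnalyticAt ℂ g a)
    (hf₂ : ∀ z ≠ a, f₂ z = c / (z - a) + g z) :
    pv (fun z => f₁ z * f₂ z) a = f₁ a * pv f₂ a + deriv f₁ a * res f₂ a := by
  obtain ⟨r₁, hr₁, hf₁r⟩ := hf₁.exists_ball_analyticOnNhd
  obtain ⟨r₂, hr₂, hgr⟩ := hg.exists_ball_analyticOnNhd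
  have hr : 0 < min r₁ r₂ := lt_min hr₁ hr₂
  have hdf₁ : DifferentiableOn ℂ f₁ (ball a (min r₁ r₂)) :=
    (hf₁r.mono (ball_subset_ball (min_le_left _ _))).differentiableOn
  have hdg : DifferentiableOn ℂ g (ball a (min r₁ r₂)) :=
    (hgr.mono (ball_subset_ball (min_le_right _ _))).differentiableOn
  have key : ∀ h : ℂ → ℂ, DifferentiableOn ℂ h (ball a (min r₁ r₂)) → ∀ ρ ∈ Ioo 0 (min r₁ r₂),
      (∮ z in C(a, ρ), h z * f₂ z / (z - a)) = 2 * π * I * (h a * g a + c * deriv h a) :=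
    fun h hh ρ hρ => circleIntegral_mul_div_sub_of_simplePole isOpen_ball hρ.1
      (closedBall_subset_ball hρ.2) hh hdg hf₂
  -- The residue is the case `h z = z - a`, whose factor cancels the extra `(z - a)⁻¹`.
  have hres : res f₂ a = c := limUnder_circleIntegral_eq_of_forall_Ioo hr fun ρ hρ => by
    rw [← circleIntegral.integral_congr hρ.1.le fun z hz =>
      mul_div_cancel_left₀ (f₂ z) (sub_ne_zero.2 (ne_of_mem_sphere hz hρ.1.ne'))]
    simpa using key (· - a) (by fun_prop) ρ hρ
  have hpv : pv f₂ a = g a := limUnder_circleIntegral_eq_of_forall_Ioo hr fun ρ hρ => by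
    simpa using key 1 (differentiableOn_const 1) ρ hρ
  rw [hres, hpv]
  exact limUnder_circleIntegral_eq_of_forall_Ioo hr fun ρ hρ => (key f₁ hdf₁ ρ hρ).trans (by ring)
end

section
/- If f₁ is holomorphic at a and f₂ is meromorphic with a pole of order m at a, then p.v._{z=a}(f₁(z)·f₂(z)) = Σ_{k=0}^{m} (f₁^{(k)}(a)/k!) · p.v._{z=a}((z−a)^k · f₂(z)). -/
/-!
On a small circle around `a`, `f₂ z / (z - a)` is `g z / (z - a)` plus the poles
`c j / (z - a) ^ (j + 1)`, so Cauchy's integral formula for derivatives shows that for every `h`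
holomorphic at `a` the principal value of `h * f₂` is `h a * g a + ∑ⱼ c j * h⁽ʲ⁾(a) / j!`.
Taking `h = (z - a) ^ k` gives `p.v. ((z - a) ^ k * f₂) = c k` for `1 ≤ k ≤ m` and `g a` for
`k = 0`, and taking `h = f₁` gives exactly the claimed sum.
-/

open Filter Topology Complex

open Metric Nat

lemma pv_eq_of_forall_mem_Ioo {f : ℂ → ℂ} {a v : ℂ} {r : ℝ} (hr : 0 < r)
    (h : ∀ ρ ∈ Set.Ioo 0 r, (2 * Real.pi * I)⁻¹ * (∮ z in C(a, ρ), f z / (z - a)) = v) :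
    pv f a = v :=
  tendsto_const_nhds.congr' (eventuallyEq_of_mem (Ioo_mem_nhdsGT hr) fun ρ hρ => (h ρ hρ).symm)
    |>.limUnder_eq

lemma circleIntegrable_div_sub_pow {h : ℂ → ℂ} {a : ℂ} {ρ : ℝ} (hρ : 0 < ρ)
    (hh : ContinuousOn h (sphere a ρ)) (n : ℕ) :
    CircleIntegrable (fun z => h z / (z - a) ^ n) a ρ :=
  (hh.div (by fun_prop) fun z hz => pow_ne_zero n (sub_ne_zero.2 (ne_of_mem_sphere hz hρ.ne'))
    ).circleIntegrable hρ.le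

lemma DifferentiableOn.circleIntegral_div_sub_pow_succ {h : ℂ → ℂ} {a : ℂ} {ρ : ℝ} (hρ : 0 < ρ)
    (hh : DifferentiableOn ℂ h (closedBall a ρ)) (j : ℕ) :
    (∮ z in C(a, ρ), h z / (z - a) ^ (j + 1)) = 2 * Real.pi * I * (iteratedDeriv j h a / j !) := by
  have := hh.circleIntegral_one_div_sub_center_pow_smul hρ j
  simp only [smul_eq_mul, one_div_mul_eq_div] at this
  rw [this, mul_div_assoc', div_mul_eq_mul_div]

lemma iteratedDeriv_sub_pow_self (a : ℂ) (j k : ℕ) :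
    iteratedDeriv j (fun z => (z - a) ^ k) a = if j = k then (k ! : ℂ) else 0 := by
  simp only [iteratedDeriv_comp_sub_const (f := (· ^ k)), sub_self, iteratedDeriv_fun_pow_zero,
    Nat.cast_ite, Nat.cast_zero]

lemma mul_div_sub_eq_of_eq_add_sum_div_pow {h f g : ℂ → ℂ} {a z : ℂ} {m : ℕ} {c : ℕ → ℂ}
    (hz : z ≠ a) (hf : f z = g z + ∑ j ∈ Finset.Icc 1 m, c j / (z - a) ^ j) :
    h z * f z / (z - a) =
      h z * g z / (z - a) + ∑ j ∈ Finset.Icc 1 m, c j * (h z / (z - a) ^ (j + 1)) := by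
  have hza : z - a ≠ 0 := sub_ne_zero.2 hz
  rw [hf, mul_add, add_div, Finset.mul_sum, Finset.sum_div]
  congr 1
  refine Finset.sum_congr rfl fun j _ => ?_
  field_simp
  ring

theorem pv_mul_eq_of_eq_add_sum_div_pow {h f g : ℂ → ℂ} {a : ℂ} {m : ℕ} {c : ℕ → ℂ}
    (hh : AnalyticAt ℂ h a) (hg : AnalyticAt ℂ g a)
    (hf : ∀ z ≠ a, f z = g z + ∑ j ∈ Finset.Icc 1 m, c j / (z - a) ^ j) :
    pv (fun z => h z * f z) a =
      h a * g a + ∑ j ∈ Finset.Icc 1 m, c j * (iteratedDeriv j h a / j !) := by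
  obtain ⟨r, hr, hball⟩ :=
    Metric.mem_nhds_iff.1 (hh.eventually_analyticAt.and hg.eventually_analyticAt)
  refine pv_eq_of_forall_mem_Ioo hr fun ρ ⟨hρ, hρr⟩ => ?_
  have hsub : closedBall a ρ ⊆ ball a r := closedBall_subset_ball hρr
  have hdh : DifferentiableOn ℂ h (closedBall a ρ) := fun z hz =>
    (hball (hsub hz)).1.differentiableAt.differentiableWithinAt
  have hdhg : DifferentiableOn ℂ (fun z => h z * g z) (closedBall a ρ) := fun z hz =>
    ((hball (hsub hz)).1.differentiableAt.mul (hball (hsub hz)).2.differentiableAt)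
      |>.differentiableWithinAt
  have hint_hg : CircleIntegrable (fun z => h z * g z / (z - a)) a ρ := by
    simpa using circleIntegrable_div_sub_pow hρ
      (hdhg.continuousOn.mono sphere_subset_closedBall) 1
  have hint_poles : ∀ j ∈ Finset.Icc 1 m,
      CircleIntegrable (fun z => c j * (h z / (z - a) ^ (j + 1))) a ρ := fun j _ =>
    (circleIntegrable_div_sub_pow hρ (hdh.continuousOn.mono sphere_subset_closedBall) _).const_mul
      (c j)
  have hcauchy_hg : (∮ z in C(a, ρ), h z * g z / (z - a)) = 2 * Real.pi * I * (h a * g a) := by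
    simpa using hdhg.circleIntegral_div_sub_pow_succ hρ 0
  rw [circleIntegral.integral_congr hρ.le fun z hz =>
      mul_div_sub_eq_of_eq_add_sum_div_pow (ne_of_mem_sphere hz hρ.ne')
        (hf z (ne_of_mem_sphere hz hρ.ne')),
    circleIntegral.integral_add hint_hg (CircleIntegrable.fun_sum _ hint_poles),
    circleIntegral.integral_fun_sum hint_poles, hcauchy_hg]
  simp only [circleIntegral.integral_const_mul, hdh.circleIntegral_div_sub_pow_succ hρ,
    mul_left_comm (c _), ← Finset.mul_sum, ← mul_add]
  exact inv_mul_cancel_left₀ two_pi_I_ne_zero _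

lemma pv_sub_pow_mul_eq_of_eq_add_sum_div_pow {f g : ℂ → ℂ} {a : ℂ} {m k : ℕ} {c : ℕ → ℂ}
    (hg : AnalyticAt ℂ g a) (hf : ∀ z ≠ a, f z = g z + ∑ j ∈ Finset.Icc 1 m, c j / (z - a) ^ j)
    (hk : k ≤ m) :
    pv (fun z => (z - a) ^ k * f z) a = if k = 0 then g a else c k := by
  rw [pv_mul_eq_of_eq_add_sum_div_pow (by fun_prop) hg hf]
  simp only [iteratedDeriv_sub_pow_self, sub_self, ite_div, zero_div, mul_ite, mul_zero,
    Finset.sum_ite_eq', Finset.mem_Icc]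
  rcases k.eq_zero_or_pos with rfl | hk0
  · simp
  · simp [hk0.ne', one_le_iff_ne_zero, hk, factorial_ne_zero]

theorem pv_mul_pole_order_m_general (f₁ f₂ g : ℂ → ℂ) (a : ℂ) (m : ℕ) (c : ℕ → ℂ)
    (hf₁ : AnalyticAt ℂ f₁ a) (hg : AnalyticAt ℂ g a)
    (hf₂ : ∀ z ≠ a, f₂ z = g z + ∑ j ∈ Finset.Icc 1 m, c j / (z - a) ^ j) :
    pv (fun z => f₁ z * f₂ z) a =
      ∑ k ∈ Finset.range (m + 1),
        (iteratedDeriv k f₁ a / (k.factorial : ℂ)) * pv (fun z => (z - a) ^ k * f₂ z) a := by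
  rw [pv_mul_eq_of_eq_add_sum_div_pow hf₁ hg hf₂, Finset.range_eq_Ico,
    Finset.sum_eq_sum_Ico_succ_bot (succ_pos m), zero_add, succ_eq_add_one,
    Finset.Ico_add_one_right_eq_Icc]
  congr 1
  · rw [pv_sub_pow_mul_eq_of_eq_add_sum_div_pow hg hf₂ (zero_le m), if_pos rfl,
      iteratedDeriv_zero, factorial_zero, cast_one, div_one]
  · refine Finset.sum_congr rfl fun k hk => ?_
    obtain ⟨hk1, hkm⟩ := Finset.mem_Icc.1 hk
    rw [pv_sub_pow_mul_eq_of_eq_add_sum_div_pow hg hf₂ hkm, if_neg (one_le_iff_ne_zero.1 hk1),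
      mul_comm]

/-- If `f₁` is holomorphic at `a` and `f₂` is meromorphic with a pole of order `m`
at `a` (i.e. `f₂ z = g z + ∑_{j=1}^m c j/(z-a)^j` with `g` holomorphic at `a` and
`c m ≠ 0`), then
`p.v.(f₁·f₂) = ∑_{k=0}^{m} (f₁^{(k)}(a)/k!) p.v.((z-a)^k f₂)`. -/
theorem pv_mul_pole_order_m (f₁ f₂ g : ℂ → ℂ) (a : ℂ) (m : ℕ) (c : ℕ → ℂ)
    (hf₁ : AnalyticAt ℂ f₁ a) (hg : AnalyticAt ℂ g a) (hm : c m ≠ 0)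
    (hf₂ : ∀ z ≠ a, f₂ z = g z + ∑ j ∈ Finset.Icc 1 m, c j / (z - a) ^ j) :
    pv (fun z => f₁ z * f₂ z) a =
      ∑ k ∈ Finset.range (m + 1),
        (iteratedDeriv k f₁ a / (k.factorial : ℂ)) * pv (fun z => (z - a) ^ k * f₂ z) a :=
  pv_mul_pole_order_m_general f₁ f₂ g a m c hf₁ hg hf₂
end

section
/- Ramanujan's identity: for every complex (or real) x, Σ_{n=1}^{∞} ((1 + 1/2 + ⋯ + 1/n)/n!) · xⁿ = eˣ · Σ_{n=1}^{∞} ((−1)^{n−1}/(n!·n)) · xⁿ. -/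
/-!
Multiplying an exponential generating function `∑ bₙ xⁿ / n!` by `eˣ` replaces its coefficients by
their binomial transform `∑ₖ C(n, k) bₖ`. For `bₖ = (-1)^(k-1) / k` this transform is `Hₙ`:
by Pascal's rule and `C(n, j) / (j + 1) = C(n + 1, j + 1) / (n + 1)` it grows by
`(1 / n) ∑ₖ₌₁ⁿ (-1)^(k-1) C(n, k) = 1 / n` from `n - 1` to `n`.
-/

open Finset Nat

theorem sum_range_neg_one_pow_mul_choose_succ {R : Type*} [CommRing R] {n : ℕ} (hn : n ≠ 0) :
    ∑ j ∈ range n, (-1 : R) ^ j * n.choose (j + 1) = 1 := by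
  have h := congrArg (Int.cast : ℤ → R) (Int.alternating_sum_range_choose_of_ne hn)
  push_cast at h
  rw [sum_range_succ'] at h
  simp only [pow_succ, pow_zero, mul_neg_one, neg_mul, sum_neg_distrib, Nat.choose_zero_right,
    Nat.cast_one, one_mul] at h
  linear_combination -h

theorem sum_range_neg_one_pow_mul_choose_div_succ {K : Type*} [Field K] [CharZero K] (n : ℕ) :
    ∑ j ∈ range (n + 1), (-1 : K) ^ j * n.choose j / (j + 1) = 1 / (n + 1) := by
  have hchoose (j : ℕ) : (n.choose j : K) / (j + 1) = (n + 1).choose (j + 1) / (n + 1) := by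
    have h := congrArg (Nat.cast : ℕ → K) (Nat.add_one_mul_choose_eq n j)
    push_cast at h
    field_simp
    linear_combination h
  simp_rw [mul_div_assoc, hchoose, ← mul_div_assoc, ← sum_div,
    sum_range_neg_one_pow_mul_choose_succ n.succ_ne_zero]

theorem sum_range_neg_one_pow_mul_choose_succ_div_succ_eq_sum_Icc_one_div {K : Type*} [Field K]
    [CharZero K] (n : ℕ) :
    ∑ j ∈ range n, (-1 : K) ^ j * n.choose (j + 1) / (j + 1) = ∑ k ∈ Icc 1 n, (1 : K) / k := by
  induction n with
  | zero => simp
  | succ n ih =>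
    have pascal : ∀ j ∈ range (n + 1), (-1 : K) ^ j * (n + 1).choose (j + 1) / (j + 1) =
        (-1 : K) ^ j * n.choose (j + 1) / (j + 1) + (-1 : K) ^ j * n.choose j / (j + 1) := by
      intro j _
      rw [Nat.choose_succ_succ]
      push_cast
      ring
    rw [sum_congr rfl pascal, sum_add_distrib, sum_range_neg_one_pow_mul_choose_div_succ,
      sum_range_succ, Nat.choose_succ_self, sum_Icc_succ_top (by omega), ← ih]
    push_cast
    ring

-- The `k = 0` term vanishes because `x / 0 = 0`.
theorem sum_range_choose_mul_neg_one_pow_succ_div_eq_sum_Icc_one_div {K : Type*} [Field K]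
    [CharZero K] (n : ℕ) :
    ∑ k ∈ range (n + 1), n.choose k * ((-1 : K) ^ (k + 1) / k) = ∑ k ∈ Icc 1 n, (1 : K) / k := by
  rw [sum_range_succ', ← sum_range_neg_one_pow_mul_choose_succ_div_succ_eq_sum_Icc_one_div]
  simp only [Nat.cast_zero, div_zero, mul_zero, add_zero, Nat.cast_add_one, pow_succ,
    mul_neg_one, neg_neg]
  exact sum_congr rfl fun j _ => by ring

theorem tsum_nat_succ_eq_tsum {α : Type*} [AddCommMonoid α] [TopologicalSpace α] {f : ℕ → α}
    (hf : f 0 = 0) : ∑' n, f (n + 1) = ∑' n, f n :=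
  Nat.succ_injective.tsum_eq fun n hn => by
    cases n with
    | zero => exact absurd hf hn
    | succ m => exact ⟨m, rfl⟩

section ExponentialGeneratingFunction

variable {𝕂 : Type*} [RCLike 𝕂]

theorem summable_norm_mul_pow_div_factorial_of_norm_le {b : ℕ → 𝕂} {C : ℝ} (hb : ∀ n, ‖b n‖ ≤ C)
    (x : 𝕂) :
    Summable fun n => ‖b n * x ^ n / (n ! : 𝕂)‖ := by
  refine ((Real.summable_pow_div_factorial ‖x‖).mul_left C).of_nonneg_of_le
    (fun n => norm_nonneg _) fun n => ?_
  rw [norm_div, norm_mul, norm_pow, RCLike.norm_natCast, mul_div_assoc]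
  exact mul_le_mul_of_nonneg_right (hb n) (by positivity)

theorem tsum_mul_pow_div_factorial_mul_exp (b : ℕ → 𝕂) (x : 𝕂)
    (hb : Summable fun n => ‖b n * x ^ n / (n ! : 𝕂)‖) :
    (∑' n, b n * x ^ n / n !) * NormedSpace.exp x =
      ∑' n, (∑ k ∈ range (n + 1), n.choose k * b k) * x ^ n / n ! := by
  rw [NormedSpace.exp_eq_tsum_div, tsum_mul_tsum_eq_tsum_sum_antidiagonal_of_summable_norm hb
    (NormedSpace.norm_expSeries_div_summable x)]
  refine tsum_congr fun n => ?_
  rw [Nat.sum_antidiagonal_eq_sum_range_succ (fun i j => b i * x ^ i / i ! * (x ^ j / j !)),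
    sum_mul, sum_div]
  refine sum_congr rfl fun k hk => ?_
  have hkn : k ≤ n := Nat.lt_succ_iff.mp (mem_range.mp hk)
  have h := congrArg (Nat.cast : ℕ → 𝕂) (Nat.choose_mul_factorial_mul_factorial hkn)
  push_cast at h
  have hc : (n.choose k : 𝕂) ≠ 0 := Nat.cast_ne_zero.mpr (Nat.choose_pos hkn).ne'
  rw [← h, ← pow_mul_pow_sub x hkn]
  field_simp

end ExponentialGeneratingFunction

/-- Ramanujan's identity
`∑_{n=1}^∞ (H_n/n!) xⁿ = eˣ ∑_{n=1}^∞ ((-1)^{n-1}/(n!·n)) xⁿ`. -/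
theorem ramanujan_identity (x : ℂ) :
    ∑' n : ℕ, ((∑ k ∈ Finset.Icc 1 (n + 1), (1 : ℂ) / k) / ((n + 1).factorial : ℂ))
        * x ^ (n + 1) =
      Complex.exp x *
        ∑' n : ℕ, ((-1 : ℂ) ^ n / (((n + 1).factorial : ℂ) * (n + 1))) * x ^ (n + 1) := by
  -- `b n = (-1)^(n-1) / n`, and `b 0 = 0` because `x / 0 = 0`
  set b : ℕ → ℂ := fun n => (-1) ^ (n + 1) / n
  have hb_norm (n : ℕ) : ‖b n‖ ≤ 1 := by
    simpa [b] using Nat.cast_inv_le_one (α := ℝ) n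
  have hRHS : ∑' n : ℕ, ((-1 : ℂ) ^ n / (((n + 1).factorial : ℂ) * (n + 1))) * x ^ (n + 1) =
      ∑' n, b n * x ^ n / n ! := by
    rw [← tsum_nat_succ_eq_tsum (f := fun n => b n * x ^ n / n !) (by simp [b])]
    refine tsum_congr fun n => ?_
    simp only [b]
    push_cast
    field_simp
    ring
  have hLHS : ∑' n : ℕ, ((∑ k ∈ Finset.Icc 1 (n + 1), (1 : ℂ) / k) / ((n + 1).factorial : ℂ))
        * x ^ (n + 1) = ∑' n, (∑ k ∈ range (n + 1), n.choose k * b k) * x ^ n / n ! := by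
    rw [← tsum_nat_succ_eq_tsum
      (f := fun n => (∑ k ∈ range (n + 1), n.choose k * b k) * x ^ n / n !) (by simp [b])]
    refine tsum_congr fun n => ?_
    rw [sum_range_choose_mul_neg_one_pow_succ_div_eq_sum_Icc_one_div, div_mul_eq_mul_div]
  rw [hLHS, hRHS, mul_comm, Complex.exp_eq_exp_ℂ, tsum_mul_pow_div_factorial_mul_exp b x
    (summable_norm_mul_pow_div_factorial_of_norm_le hb_norm x)]
end

section
/- The Gompertz-type identity: −e·Ei(−1) = e·( Σ_{n=1}^{∞} (−1)^{n−1}/(n!·n) − γ ), where Ei(−1) = ∫_{−∞}^{−1} eᵗ/t dt and γ is Euler's constant. -/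
open MeasureTheory

/-- `Ei(-1) = ∫_{-∞}^{-1} eᵗ/t dt`. -/
noncomputable def EiNegOne : ℝ := ∫ t in Set.Iio (-1 : ℝ), Real.exp t / t

/-!
Since `γ = -Γ'(1) = -∫₀^∞ log t · e^{-t} dt`, split this integral at `1` and integrate by
parts, taking `1 - e^{-t}` as the antiderivative of `e^{-t}` on `(0, 1]` (so that the boundary term
vanishes at `0`) and `-e^{-t}` on `[1, ∞)`. This gives
`γ = ∫₀¹ (1 - e^{-t})/t dt - ∫₁^∞ e^{-t}/t dt`. The second integral is `-Ei(-1)`;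
expanding `(1 - e^{-t})/t` in its exponential series and integrating termwise turns the first into
`∑ (-1)^{n-1}/(n!·n)`.
-/

open Real Set Filter Topology intervalIntegral

theorem hasSum_one_sub_exp_neg_div {t : ℝ} (ht : t ≠ 0) :
    HasSum (fun n : ℕ => (-1) ^ n * t ^ n / (n + 1).factorial) ((1 - exp (-t)) / t) := by
  have h := (hasSum_nat_add_iff' 1).mpr (NormedSpace.expSeries_div_hasSum_exp (-t))
  rw [← exp_eq_exp_ℝ, Finset.sum_range_one] at h
  convert! h.neg.div_const t using 1
  · ext n
    field_simp
    ring
  · simp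

theorem hasSum_integral_one_sub_exp_neg_div (x : ℝ) :
    HasSum (fun n : ℕ => (-1) ^ n * x ^ (n + 1) / ((n + 1).factorial * (n + 1)))
      (∫ t in 0..x, (1 - exp (-t)) / t) := by
  have hterm (n : ℕ) : ∫ t in 0..x, (-1) ^ n * t ^ n / (n + 1).factorial =
      (-1) ^ n * x ^ (n + 1) / ((n + 1).factorial * (n + 1)) := by
    rw [intervalIntegral.integral_div, intervalIntegral.integral_const_mul, integral_pow]
    field_simp
    simp
  simp_rw [← hterm]
  refine hasSum_integral_of_dominated_convergence (fun n _ => |x| ^ n / n.factorial)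
    (fun n => by fun_prop) (fun n => ?_) ?_ intervalIntegrable_const ?_
  · filter_upwards with t ht
    have hx : |t| ≤ |x| := by simpa using abs_sub_left_of_mem_uIcc (uIoc_subset_uIcc ht)
    rw [norm_div, norm_mul, norm_pow, norm_pow, norm_neg, norm_one, one_pow, one_mul,
      Real.norm_eq_abs, Real.norm_natCast]
    gcongr
    omega
  · exact .of_forall fun _ _ => Real.summable_pow_div_factorial |x|
  · filter_upwards [Measure.ae_ne volume 0] with t ht _ using hasSum_one_sub_exp_neg_div ht

theorem one_sub_exp_neg_le_self (t : ℝ) : 1 - exp (-t) ≤ t := by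
  linarith [add_one_le_exp (-t)]

theorem intervalIntegrable_one_sub_exp_neg_div {b : ℝ} (hb : 0 ≤ b) :
    IntervalIntegrable (fun t => (1 - exp (-t)) / t) volume 0 b := by
  rw [intervalIntegrable_iff_integrableOn_Ioc_of_le hb]
  refine Measure.integrableOn_of_bounded (M := 1) measure_Ioc_lt_top.ne
    (by fun_prop : Measurable fun t : ℝ => (1 - exp (-t)) / t).aestronglyMeasurable ?_
  filter_upwards [ae_restrict_mem measurableSet_Ioc] with t ⟨ht, _⟩
  have h_nonneg : 0 ≤ 1 - exp (-t) := by simpa using ht.le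
  rw [norm_div, Real.norm_of_nonneg h_nonneg, Real.norm_of_nonneg ht.le, div_le_one ht]
  exact one_sub_exp_neg_le_self t

theorem intervalIntegrable_log_mul_exp_neg (a b : ℝ) :
    IntervalIntegrable (fun t => log t * exp (-t)) volume a b :=
  intervalIntegrable_log'.mul_continuousOn (by fun_prop)

theorem integrableOn_log_mul_exp_neg_Ioi_one :
    IntegrableOn (fun t => log t * exp (-t)) (Ioi 1) := by
  have h_gamma_two : IntegrableOn (fun t => exp (-t) * t ^ ((2 : ℝ) - 1)) (Ioi 1) :=
    (GammaIntegral_convergent two_pos).mono_set (Ioi_subset_Ioi zero_le_one)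
  refine h_gamma_two.mono' (by fun_prop) ?_
  filter_upwards [ae_restrict_mem measurableSet_Ioi] with t ht
  rw [norm_mul, norm_of_nonneg (log_nonneg ht.le), norm_of_nonneg (exp_pos _).le,
    show (2 : ℝ) - 1 = 1 by norm_num, rpow_one, mul_comm]
  gcongr
  exact (log_le_sub_one_of_pos (zero_lt_one.trans ht)).trans (by linarith)

theorem integrableOn_exp_neg_div_Ioi {a : ℝ} (ha : 0 < a) :
    IntegrableOn (fun t => exp (-t) / t) (Ioi a) := by
  refine ((exp_neg_integrableOn_Ioi a one_pos).div_const a).mono'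
    (by fun_prop : Measurable fun t : ℝ => exp (-t) / t).aestronglyMeasurable ?_
  filter_upwards [ae_restrict_mem measurableSet_Ioi] with t ht
  rw [neg_one_mul, norm_div, norm_of_nonneg (exp_pos _).le, norm_of_nonneg (ha.trans ht).le]
  gcongr
  exact ht.le

theorem tendsto_one_sub_exp_neg_mul_log_nhdsGT_zero :
    Tendsto (fun t => (1 - exp (-t)) * log t) (𝓝[>] 0) (𝓝 0) := by
  have h_mul_log : Tendsto (fun t => t * log t) (𝓝[>] 0) (𝓝 0) := by
    simpa using continuous_mul_log.tendsto 0 |>.mono_left nhdsWithin_le_nhds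
  refine squeeze_zero_norm' ?_ (by simpa using h_mul_log.norm)
  filter_upwards [self_mem_nhdsWithin] with t (ht : 0 < t)
  have h_nonneg : 0 ≤ 1 - exp (-t) := by simpa using ht.le
  rw [norm_mul, Real.norm_of_nonneg h_nonneg, Real.norm_eq_abs, abs_of_pos ht]
  gcongr
  exact one_sub_exp_neg_le_self t

theorem integral_log_mul_exp_neg_zero_one :
    ∫ t in 0..1, log t * exp (-t) = -∫ t in 0..1, (1 - exp (-t)) / t := by
  have h_deriv : ∀ t ∈ Ioo (0 : ℝ) 1, HasDerivAt (fun t => (1 - exp (-t)) * log t)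
      (log t * exp (-t) + (1 - exp (-t)) / t) t := by
    intro t ht
    refine (((hasDerivAt_neg t).exp.const_sub 1).fun_mul (hasDerivAt_log ht.1.ne')).congr_deriv ?_
    ring
  have h_one : Tendsto (fun t => (1 - exp (-t)) * log t) (𝓝[<] 1) (𝓝 0) := by
    have : ContinuousAt (fun t => (1 - exp (-t)) * log t) 1 := by fun_prop (disch := norm_num)
    simpa using this.tendsto.mono_left nhdsWithin_le_nhds
  have h := integral_eq_sub_of_hasDerivAt_of_tendsto zero_lt_one h_deriv
    ((intervalIntegrable_log_mul_exp_neg 0 1).add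
      (intervalIntegrable_one_sub_exp_neg_div zero_le_one))
    tendsto_one_sub_exp_neg_mul_log_nhdsGT_zero h_one
  rw [intervalIntegral.integral_add (intervalIntegrable_log_mul_exp_neg 0 1)
    (intervalIntegrable_one_sub_exp_neg_div zero_le_one)] at h
  linarith

theorem integral_log_mul_exp_neg_Ioi_one :
    ∫ t in Ioi 1, log t * exp (-t) = ∫ t in Ioi 1, exp (-t) / t := by
  have h_deriv : ∀ t ∈ Ici (1 : ℝ), HasDerivAt (fun t => -(exp (-t) * log t))
      (log t * exp (-t) - exp (-t) / t) t := by
    intro t ht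
    refine ((hasDerivAt_neg t).exp.fun_mul
      (hasDerivAt_log (zero_lt_one.trans_le ht).ne')).fun_neg.congr_deriv ?_
    ring
  have h_top : Tendsto (fun t => -(exp (-t) * log t)) atTop (𝓝 0) := by
    rw [← neg_zero]
    refine (squeeze_zero_norm' ?_ (tendsto_pow_mul_exp_neg_atTop_nhds_zero 1)).neg
    filter_upwards [eventually_ge_atTop 1] with t ht
    rw [norm_mul, norm_of_nonneg (exp_pos _).le, norm_of_nonneg (log_nonneg ht), pow_one,
      mul_comm]
    gcongr
    exact (log_le_sub_one_of_pos (zero_lt_one.trans_le ht)).trans (by linarith)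
  have h := integral_Ioi_of_hasDerivAt_of_tendsto' h_deriv
    (integrableOn_log_mul_exp_neg_Ioi_one.sub (integrableOn_exp_neg_div_Ioi one_pos)) h_top
  rw [integral_sub integrableOn_log_mul_exp_neg_Ioi_one
    (integrableOn_exp_neg_div_Ioi one_pos)] at h
  rwa [log_one, mul_zero, neg_zero, sub_zero, sub_eq_zero] at h

theorem integral_log_mul_exp_neg_Ioi_zero :
    ∫ t in Ioi 0, log t * exp (-t) = -eulerMascheroniConstant := by
  have h_integral := Complex.hasDerivAt_GammaIntegral (s := 1) (by norm_num)
  have h_eq : Complex.Gamma =ᶠ[𝓝 1] Complex.GammaIntegral := by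
    filter_upwards [(isOpen_lt continuous_const Complex.continuous_re).mem_nhds
      (by norm_num : (0 : ℝ) < (1 : ℂ).re)] with s hs using Complex.Gamma_eq_integral hs
  have h := (h_integral.congr_of_eventuallyEq h_eq).unique Complex.hasDerivAt_Gamma_one
  simp only [sub_self, Complex.cpow_zero, one_mul, ← Complex.ofReal_mul,
    integral_complex_ofReal] at h
  exact_mod_cast h

theorem EiNegOne_eq_neg_integral_exp_neg_div : EiNegOne = -∫ t in Ioi 1, exp (-t) / t := by
  rw [EiNegOne, setIntegral_congr_set Iio_ae_eq_Iic, ← integral_comp_neg_Ioi,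
    ← MeasureTheory.integral_neg]
  exact setIntegral_congr_fun measurableSet_Ioi fun t _ => div_neg _

theorem eulerMascheroniConstant_eq_integral_sub_integral :
    eulerMascheroniConstant =
      (∫ t in 0..1, (1 - exp (-t)) / t) - ∫ t in Ioi 1, exp (-t) / t := by
  rw [← neg_neg eulerMascheroniConstant, ← integral_log_mul_exp_neg_Ioi_zero,
    ← integral_interval_add_Ioi' (intervalIntegrable_log_mul_exp_neg 0 1)
      integrableOn_log_mul_exp_neg_Ioi_one,
    integral_log_mul_exp_neg_zero_one, integral_log_mul_exp_neg_Ioi_one]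
  ring

/-- Gompertz-type identity: `-e·Ei(-1) = e·(∑_{n=1}^∞ (-1)^{n-1}/(n!·n) - γ)`. -/
theorem gompertz_identity :
    -(Real.exp 1) * EiNegOne =
      Real.exp 1 *
        ((∑' n : ℕ, (-1 : ℝ) ^ n / (((n + 1).factorial : ℝ) * (n + 1))) -
          Real.eulerMascheroniConstant) := by
  have h_series := hasSum_integral_one_sub_exp_neg_div 1
  simp only [one_pow, mul_one] at h_series
  rw [EiNegOne_eq_neg_integral_exp_neg_div, h_series.tsum_eq,
    eulerMascheroniConstant_eq_integral_sub_integral]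
  ring
end

section
/- For every natural n ≥ 1 and every nonzero complex z, Σ_{k=2}^{∞} ((−1)^{k−1}(n+k−1)/(n+k)!) z^k = Σ_{j=0}^{n+1} (−1)^{j+n} ((j−1)/j!) z^{j−n} + (−1)^n e^{−z} (z^{−n+1} + z^{−n}). -/
/-!
With `w = -z`, the `k`-th term of the series is `-(-1)^n z^{-n}` times the term of index
`n + k + 2` of `∑_m (m - 1) w^m / m! = (w - 1) e^w`, and the finite sum is `(-1)^n z^{-n}` times
the first `n + 2` terms of the same series. So the left-hand side is a tail of this series and
the identity is the splitting of its sum into head and tail.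
-/

open Finset
open scoped Nat

theorem hasSum_sub_one_mul_pow_div_factorial {𝕂 : Type*} [NormedField 𝕂]
    [NormedAlgebra ℚ 𝕂] [CompleteSpace 𝕂] (x : 𝕂) :
    HasSum (fun m : ℕ => ((m : 𝕂) - 1) * x ^ m / m !) ((x - 1) * NormedSpace.exp x) := by
  have hexp := NormedSpace.expSeries_div_hasSum_exp x
  have hmul : HasSum (fun m : ℕ => (m : 𝕂) * x ^ m / m !) (x * NormedSpace.exp x) := by
    rw [← hasSum_nat_add_iff' 1, sum_range_one, Nat.cast_zero, zero_mul, zero_div, sub_zero]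
    refine (hexp.mul_left x).congr_fun fun m => ?_
    have : CharZero 𝕂 := Algebra.charZero_of_charZero ℚ 𝕂
    push_cast [Nat.factorial_succ]
    field_simp
    ring
  rw [sub_one_mul]
  exact (hmul.sub hexp).congr_fun fun m => by ring

theorem f_n_closed_form_general (n : ℕ) (z : ℂ) (hz : z ≠ 0) :
    ∑' k : ℕ, ((-1 : ℂ) ^ (k + 1) * ((n : ℂ) + (k : ℂ) + 1) / ((n + k + 2).factorial : ℂ))
        * z ^ (k + 2) =
      (∑ j ∈ Finset.range (n + 2),
          (-1 : ℂ) ^ (j + n) * (((j : ℂ) - 1) / (j.factorial : ℂ)) * z ^ ((j : ℤ) - (n : ℤ)))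
        + (-1 : ℂ) ^ n * Complex.exp (-z) * (z ^ (1 - (n : ℤ)) + z ^ (-(n : ℤ))) := by
  have htail := (hasSum_nat_add_iff' (n + 2)).mpr (hasSum_sub_one_mul_pow_div_factorial (-z))
  rw [← Complex.exp_eq_exp_ℂ] at htail
  have hhead : ∑ j ∈ range (n + 2),
      (-1 : ℂ) ^ (j + n) * (((j : ℂ) - 1) / (j.factorial : ℂ)) * z ^ ((j : ℤ) - (n : ℤ))
      = (-1) ^ n / z ^ n * ∑ j ∈ range (n + 2), ((j : ℂ) - 1) * (-z) ^ j / j ! := by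
    rw [mul_sum]
    refine sum_congr rfl fun j _ => ?_
    rw [zpow_sub₀ hz, zpow_natCast, zpow_natCast, neg_pow, pow_add]
    ring
  rw [((htail.mul_left (-(-1) ^ n / z ^ n)).congr_fun fun k => ?term).tsum_eq, hhead,
    zpow_sub₀ hz, zpow_one, zpow_neg, zpow_natCast]
  · field_simp
    ring
  case term =>
    rw [show k + (n + 2) = n + k + 2 by ring]
    push_cast
    simp only [neg_pow z, pow_add]
    -- `ring` does not know `((-1)^n)^2 = 1`, so split on `(-1)^n = ±1`.
    rcases neg_one_pow_eq_or ℂ n with h | h <;> rw [h] <;> field_simp <;> ring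

/-- For `n ≥ 1` and `z ≠ 0`:
`∑_{k=2}^∞ ((-1)^{k-1}(n+k-1)/(n+k)!) z^k
  = ∑_{j=0}^{n+1} (-1)^{j+n}((j-1)/j!) z^{j-n} + (-1)^n e^{-z}(z^{-n+1}+z^{-n})`. -/
theorem f_n_closed_form (n : ℕ) (hn : 1 ≤ n) (z : ℂ) (hz : z ≠ 0) :
    ∑' k : ℕ, ((-1 : ℂ) ^ (k + 1) * ((n : ℂ) + (k : ℂ) + 1) / ((n + k + 2).factorial : ℂ))
        * z ^ (k + 2) =
      (∑ j ∈ Finset.range (n + 2),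
          (-1 : ℂ) ^ (j + n) * (((j : ℂ) - 1) / (j.factorial : ℂ)) * z ^ ((j : ℤ) - (n : ℤ)))
        + (-1 : ℂ) ^ n * Complex.exp (-z) * (z ^ (1 - (n : ℤ)) + z ^ (-(n : ℤ))) :=
  f_n_closed_form_general n z hz
end

section
/- For every complex z, (z+1) · Σ_{n=1}^{∞} Σ_{k=1}^{∞} (−1)^k z^k/(k+n)! = −e^{−z} + (1−e)·z + 1, where the double series converges absolutely. -/
open Finset Nat

/-! Summing along the diagonals `n + k = m`, the inner sum is the geometric sum
`(w + ⋯ + w ^ (m + 1)) / (m + 2)!` with `w = -z`, which multiplication by `1 - w = z + 1`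
telescopes to `(w - w ^ (m + 2)) / (m + 2)!`. Summing over `m` leaves two tails of the
exponential series: `w (e - 2)` and `e ^ w - 1 - w`. -/

theorem HasSum.sum_antidiagonal {α A : Type*} [AddCommMonoid α] [TopologicalSpace α]
    [ContinuousAdd α] [RegularSpace α] [AddMonoid A] [HasAntidiagonal A]
    {f : A × A → α} {a : α} (hf : HasSum f a) :
    HasSum (fun n => ∑ p ∈ antidiagonal n, f p) a :=
  (HasAntidiagonal.sigmaAntidiagonalEquivProd.hasSum_iff.mpr hf).sigma fun n =>
    sum_coe_sort (antidiagonal n) f ▸ hasSum_fintype _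

theorem Complex.hasSum_pow_div_factorial_add_two (x : ℂ) :
    HasSum (fun n => x ^ (n + 2) / ((n + 2)! : ℂ)) (exp x - 1 - x) := by
  have h := (hasSum_nat_add_iff' 2).mpr (exp_eq_exp_ℂ ▸ NormedSpace.expSeries_div_hasSum_exp x)
  simpa [sum_range_succ, sub_sub] using h

theorem Real.summable_prod_pow_div_factorial_add {r : ℝ} (hr : 0 ≤ r) :
    Summable fun p : ℕ × ℕ => r ^ (p.2 + 1) / ((p.2 + 1 + (p.1 + 1))! : ℝ) := by
  have hpow : Summable fun k : ℕ => r ^ (k + 1) / ((k + 1)! : ℝ) :=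
    (summable_nat_add_iff 1).mpr (summable_pow_div_factorial r)
  have hinv : Summable fun n : ℕ => 1 / ((n + 1)! : ℝ) := by
    simpa using (summable_nat_add_iff 1).mpr (summable_pow_div_factorial 1)
  refine (hinv.mul_of_nonneg hpow (fun _ => by positivity) (fun _ => by positivity)).of_nonneg_of_le
    (fun _ => by positivity) fun p => ?_
  rw [one_div_mul_eq_div, div_div]
  gcongr
  exact_mod_cast Nat.le_of_dvd (factorial_pos _) (factorial_mul_factorial_dvd_factorial_add _ _)

theorem one_sub_mul_sum_antidiagonal_pow_div_factorial {𝕜 : Type*} [Field 𝕜] (w : 𝕜) (m : ℕ) :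
    (1 - w) * ∑ p ∈ antidiagonal m, w ^ (p.2 + 1) / ((p.2 + 1 + (p.1 + 1))! : 𝕜) =
      (w - w ^ (m + 2)) / (m + 2)! := by
  have hterm : ∀ p ∈ antidiagonal m,
      w ^ (p.2 + 1) / ((p.2 + 1 + (p.1 + 1))! : 𝕜) = w / (m + 2)! * w ^ p.2 := by
    intro p hp
    rw [HasAntidiagonal.mem_antidiagonal] at hp
    rw [show p.2 + 1 + (p.1 + 1) = m + 2 by omega]
    ring
  rw [sum_congr rfl hterm, ← mul_sum, ← Nat.sum_antidiagonal_swap]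
  simp only [Prod.snd_swap]
  rw [Nat.sum_antidiagonal_eq_sum_range_succ (fun i _ => w ^ i)]
  linear_combination (w / (m + 2)!) * mul_neg_geom_sum w (m + 1)

/-- `(z+1)·∑_{n=1}^∞ ∑_{k=1}^∞ (-1)^k z^k/(k+n)! = -e^{-z} + (1-e)z + 1`,
with the double series absolutely convergent. -/
theorem double_series_identity (z : ℂ) :
    Summable (fun p : ℕ × ℕ =>
      ‖(-1 : ℂ) ^ (p.2 + 1) * z ^ (p.2 + 1) / ((p.2 + 1 + (p.1 + 1)).factorial : ℂ)‖) ∧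
    (z + 1) *
        ∑' n : ℕ, ∑' k : ℕ,
          (-1 : ℂ) ^ (k + 1) * z ^ (k + 1) / ((k + 1 + (n + 1)).factorial : ℂ) =
      -Complex.exp (-z) + (1 - Real.exp 1) * z + 1 := by
  simp_rw [← neg_pow]
  set f : ℕ × ℕ → ℂ := fun p => (-z) ^ (p.2 + 1) / ((p.2 + 1 + (p.1 + 1))! : ℂ)
  have hnorm : Summable fun p => ‖f p‖ := by
    simpa [f, norm_div, norm_pow] using Real.summable_prod_pow_div_factorial_add (norm_nonneg z)
  refine ⟨hnorm, ?_⟩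
  have hdiag : HasSum (fun m => (1 - -z) * ∑ p ∈ antidiagonal m, f p) ((1 - -z) * ∑' p, f p) :=
    hnorm.of_norm.hasSum.sum_antidiagonal.mul_left _
  have hclosed : HasSum (fun m => (1 - -z) * ∑ p ∈ antidiagonal m, f p)
      (-z * (Complex.exp 1 - 1 - 1) - (Complex.exp (-z) - 1 - -z)) := by
    have hsplit : ∀ m : ℕ, (-z - (-z) ^ (m + 2)) / ((m + 2)! : ℂ) =
        -z * (1 ^ (m + 2) / (m + 2)!) - (-z) ^ (m + 2) / (m + 2)! := fun m => by ring
    simp_rw [f, one_sub_mul_sum_antidiagonal_pow_div_factorial, hsplit]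
    exact ((Complex.hasSum_pow_div_factorial_add_two 1).mul_left (-z)).sub
      (Complex.hasSum_pow_div_factorial_add_two (-z))
  show (z + 1) * ∑' n, ∑' k, f (n, k) = _
  rw [← hnorm.of_norm.tsum_prod, show z + 1 = 1 - -z by ring, hdiag.unique hclosed]
  push_cast
  ring
end
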